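/- Every compact operator T on an infinite-dimensional complex Hilbert space H has a nontrivial closed invariant subspace, i.e., there exists a closed subspace M of H with M ≠ {0}, M ≠ H, and T(M) ⊆ M. -/

import Mathlib

/-!
An eigenvector of `T` spans a closed invariant line. Otherwise, by the Fredholm alternative, `T` is
quasinilpotent, and we follow Hilden's argument. Suppose every nonzero `y` is cyclic, i.e. the
vectors `p(T) y` with `p` a polynomial are dense. Choose a ball `B = closedBall x₀ 1` with
`0 ∉ closure (T B)`. That closure is compact and misses `0`, so finitely many polynomials `p`
suffice to send each point of `T B` back into `B` by some `p(T)`. Iterating gives operators `P_m`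
commuting with `T` with `‖P_m‖ ≤ c ^ m` and `P_m (T ^ m x₀) ∈ B`. But `c ^ m ‖T ^ m‖ → 0` by
Gelfand's formula, while `B` stays away from `0`.
-/

open Filter Topology Polynomial Module End Metric

theorem Polynomial.commute_aeval_self {R A : Type*} [CommSemiring R] [Semiring A] [Algebra R A]
    (a : A) (p : R[X]) : Commute (aeval a p) a := by
  simpa using ((commute_X p).map (aeval a)).symm

section NormedSpace

variable {𝕜 E F : Type*} [NontriviallyNormedField 𝕜] [NormedAddCommGroup E] [NormedSpace 𝕜 E]
  [NormedAddCommGroup F] [NormedSpace 𝕜 F]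

theorem exists_closed_invariant_of_hasEigenvalue [CompleteSpace 𝕜]
    (hE : ¬FiniteDimensional 𝕜 E) {T : E →L[𝕜] E} {μ : 𝕜} (hμ : HasEigenvalue (T : End 𝕜 E) μ) :
    ∃ M : Submodule 𝕜 E, IsClosed (M : Set E) ∧ M ≠ ⊥ ∧ M ≠ ⊤ ∧ ∀ x ∈ M, T x ∈ M := by
  obtain ⟨v, hv⟩ := hμ.exists_hasEigenvector
  refine ⟨𝕜 ∙ v, Submodule.closed_of_finiteDimensional _, ?_, ?_, ?_⟩
  · simpa [Submodule.span_singleton_eq_bot] using hv.2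
  · intro htop
    have : FiniteDimensional 𝕜 (⊤ : Submodule 𝕜 E) := htop ▸ inferInstance
    exact hE Submodule.topEquiv.finiteDimensional
  · intro x hx
    obtain ⟨a, rfl⟩ := Submodule.mem_span_singleton.mp hx
    have hTv : T v = μ • v := hv.apply_eq_smul
    rw [map_smul, hTv, smul_comm]
    exact Submodule.smul_mem _ _ hx

theorem IsCompactOperator.spectralRadius_eq_zero [CompleteSpace E] {T : E →L[𝕜] E}
    (hT : IsCompactOperator T)
    (h : ∀ μ ≠ 0, ¬HasEigenvalue (T : End 𝕜 E) μ) : spectralRadius 𝕜 T = 0 := by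
  refine le_antisymm (iSup₂_le fun μ hμ => ?_) bot_le
  obtain rfl : μ = 0 := by
    by_contra hμ0
    exact h μ hμ0 ((hT.hasEigenvalue_iff_mem_spectrum hμ0).mpr hμ)
  simp

namespace ContinuousLinearMap

noncomputable def cyclicSubmodule (T : E →L[𝕜] E) (y : E) : Submodule 𝕜 E :=
  LinearMap.range ((apply 𝕜 E y : (E →L[𝕜] E) →ₗ[𝕜] E) ∘ₗ (aeval T).toLinearMap)

variable (T : E →L[𝕜] E) (y : E)

theorem coe_cyclicSubmodule :
    (T.cyclicSubmodule y : Set E) = Set.range fun p : 𝕜[X] => aeval T p y :=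
  rfl

theorem mem_cyclicSubmodule_self : y ∈ T.cyclicSubmodule y :=
  ⟨1, by simp⟩

theorem cyclicSubmodule_mem_invtSubmodule : T.cyclicSubmodule y ∈ invtSubmodule (T : End 𝕜 E) := by
  rintro _ ⟨p, rfl⟩
  exact ⟨X * p, by simp⟩

end ContinuousLinearMap

theorem exists_closed_invariant_of_not_denseRange_aeval {T : E →L[𝕜] E} {y : E} (hy : y ≠ 0)
    (h : ¬DenseRange fun p : 𝕜[X] => aeval T p y) :
    ∃ M : Submodule 𝕜 E, IsClosed (M : Set E) ∧ M ≠ ⊥ ∧ M ≠ ⊤ ∧ ∀ x ∈ M, T x ∈ M := by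
  refine ⟨(T.cyclicSubmodule y).topologicalClosure, Submodule.isClosed_topologicalClosure _,
    ?_, ?_, Submodule.topologicalClosure_mem_invtSubmodule (T.cyclicSubmodule_mem_invtSubmodule y)⟩
  · exact Submodule.ne_bot_iff _ |>.mpr
      ⟨y, Submodule.le_topologicalClosure _ (T.mem_cyclicSubmodule_self y), hy⟩
  · rwa [Ne, ← Submodule.dense_iff_topologicalClosure_eq_top, T.coe_cyclicSubmodule]

theorem exists_finset_aeval_apply_mem {T : E →L[𝕜] E}
    (hT : ∀ y ≠ 0, DenseRange fun p : 𝕜[X] => aeval T p y) {K : Set E} (hK : IsCompact K)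
    (hK0 : (0 : E) ∉ K) {U : Set E} (hU : IsOpen U) (hUne : U.Nonempty) :
    ∃ s : Finset 𝕜[X], ∀ z ∈ K, ∃ p ∈ s, aeval T p z ∈ U := by
  obtain ⟨s, hs⟩ := hK.elim_finite_subcover (fun p : 𝕜[X] => aeval T p ⁻¹' U)
    (fun p => hU.preimage (aeval T p).continuous) fun z hz =>
      Set.mem_iUnion.mpr ((hT z (ne_of_mem_of_not_mem hz hK0)).exists_mem_open hU hUne)
  exact ⟨s, fun z hz => by simpa using hs hz⟩

theorem exists_commute_norm_le_pow_apply_mem {T : E →L[𝕜] E} {S : Set (E →L[𝕜] E)} {B : Set E}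
    {c : ℝ} (hS : ∀ A ∈ S, Commute A T ∧ ‖A‖ ≤ c) (hB : ∀ b ∈ B, ∃ A ∈ S, A (T b) ∈ B)
    {x : E} (hx : x ∈ B) (m : ℕ) :
    ∃ P : E →L[𝕜] E, Commute P T ∧ ‖P‖ ≤ c ^ m ∧ P ((T ^ m) x) ∈ B := by
  induction m with
  | zero =>
    exact ⟨1, Commute.one_left T, by rw [pow_zero]; exact ContinuousLinearMap.norm_id_le,
      by simpa using hx⟩
  | succ m ih =>
    obtain ⟨P, hPT, hP, hPB⟩ := ih
    obtain ⟨A, hA, hAB⟩ := hB _ hPB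
    obtain ⟨hAT, hAc⟩ := hS A hA
    refine ⟨A * P, hAT.mul_left hPT, ?_, ?_⟩
    · calc ‖A * P‖ ≤ ‖A‖ * ‖P‖ := norm_mul_le _ _
        _ ≤ c * c ^ m := mul_le_mul hAc hP (norm_nonneg _) ((norm_nonneg _).trans hAc)
        _ = c ^ (m + 1) := (pow_succ' c m).symm
    · have : (A * P) ((T ^ (m + 1)) x) = A (T (P ((T ^ m) x))) := by
        rw [pow_succ']
        exact congr_arg A (DFunLike.congr_fun hPT.eq _)
      rwa [this]

theorem ContinuousLinearMap.exists_lt_norm_apply {T : E →L[𝕜] F} (hT : T ≠ 0) (R : ℝ) :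
    ∃ x, R < ‖T x‖ := by
  obtain ⟨x, hx⟩ : ∃ x, T x ≠ 0 := by
    by_contra! h
    exact hT (ContinuousLinearMap.ext h)
  obtain ⟨a, ha⟩ := NormedField.exists_lt_norm 𝕜 (R / ‖T x‖)
  refine ⟨a • x, ?_⟩
  rw [map_smul, norm_smul]
  exact (div_lt_iff₀ (norm_pos_iff.mpr hx)).mp ha

theorem ContinuousLinearMap.norm_lt_norm_apply_of_mem_closedBall {T : E →L[𝕜] F} {x₀ b : E}
    (hx₀ : 2 * ‖T‖ < ‖T x₀‖) (hb : b ∈ closedBall x₀ 1) : ‖T‖ < ‖T b‖ := by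
  have hdist : ‖T x₀ - T b‖ ≤ ‖T‖ := by
    calc ‖T x₀ - T b‖ = ‖T (b - x₀)‖ := by rw [map_sub, norm_sub_rev]
      _ ≤ ‖T‖ * ‖b - x₀‖ := T.le_opNorm _
      _ ≤ ‖T‖ * 1 := mul_le_mul_of_nonneg_left (mem_closedBall_iff_norm.mp hb) (norm_nonneg _)
      _ = ‖T‖ := mul_one _
  linarith [norm_sub_norm_le (T x₀) (T b)]

end NormedSpace

theorem tendsto_pow_mul_of_tendsto_rpow_one_div {u : ℕ → ℝ} (hu : ∀ n, 0 ≤ u n)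
    (h : Tendsto (fun n : ℕ => u n ^ (1 / n : ℝ)) atTop (𝓝 0)) (c : ℝ) :
    Tendsto (fun n => c ^ n * u n) atTop (𝓝 0) := by
  have hc : Tendsto (fun n : ℕ => |c| * u n ^ (1 / n : ℝ)) atTop (𝓝 0) := by
    simpa using h.const_mul |c|
  have hsmall : ∀ᶠ n : ℕ in atTop, |c| * u n ^ (1 / n : ℝ) < 1 / 2 :=
    hc.eventually (gt_mem_nhds (by norm_num))
  refine squeeze_zero_norm' ?_
    (tendsto_pow_atTop_nhds_zero_of_lt_one (by norm_num : (0 : ℝ) ≤ 1 / 2) (by norm_num))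
  filter_upwards [hsmall, eventually_ge_atTop 1] with n hn hn1
  calc ‖c ^ n * u n‖ = (|c| * u n ^ (1 / n : ℝ)) ^ n := by
        rw [Real.norm_eq_abs, abs_mul, abs_pow, abs_of_nonneg (hu n), mul_pow,
          ← Real.rpow_natCast (u n ^ _), ← Real.rpow_mul (hu n),
          one_div_mul_cancel (Nat.cast_ne_zero.mpr (by omega)), Real.rpow_one]
    _ ≤ (1 / 2) ^ n :=
      pow_le_pow_left₀ (mul_nonneg (abs_nonneg c) (Real.rpow_nonneg (hu n) _)) hn.le n

theorem tendsto_pow_mul_norm_pow_of_spectralRadius_eq_zero {A : Type*} [NormedRing A]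
    [NormedAlgebra ℂ A] [CompleteSpace A] {a : A} (ha : spectralRadius ℂ a = 0) (c : ℝ) :
    Tendsto (fun n => c ^ n * ‖a ^ n‖) atTop (𝓝 0) := by
  refine tendsto_pow_mul_of_tendsto_rpow_one_div (fun n => norm_nonneg _) ?_ c
  have := (ENNReal.tendsto_toReal ENNReal.zero_ne_top).comp
    (ha ▸ spectrum.pow_norm_pow_one_div_tendsto_nhds_spectralRadius a)
  simpa [Function.comp_def, ENNReal.toReal_ofReal (Real.rpow_nonneg (norm_nonneg _) _)] using this

theorem IsCompactOperator.exists_not_denseRange_aeval {E : Type*} [NormedAddCommGroup E]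
    [NormedSpace ℂ E] [CompleteSpace E] {T : E →L[ℂ] E} (hT : IsCompactOperator T) (hT0 : T ≠ 0)
    (hrad : spectralRadius ℂ T = 0) : ∃ y ≠ 0, ¬DenseRange fun p : ℂ[X] => aeval T p y := by
  by_contra! hdense
  obtain ⟨x₀, hx₀⟩ := T.exists_lt_norm_apply hT0 (2 * ‖T‖)
  have hTpos : 0 < ‖T‖ := norm_pos_iff.mpr hT0
  have hTB (b) (hb : b ∈ closedBall x₀ 1) := T.norm_lt_norm_apply_of_mem_closedBall hx₀ hb
  have hB (b) (hb : b ∈ closedBall x₀ 1) : 1 < ‖b‖ := by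
    by_contra! hb1
    nlinarith [hTB b hb, T.le_opNorm b]
  have hK0 : (0 : E) ∉ closure (T '' closedBall x₀ 1) := fun h0 => by
    have : closure (T '' closedBall x₀ 1) ⊆ {w | ‖T‖ ≤ ‖w‖} :=
      closure_minimal (Set.image_subset_iff.mpr fun b hb => (hTB b hb).le)
        (isClosed_le continuous_const continuous_norm)
    simpa [hTpos.not_ge] using this h0
  obtain ⟨s, hs⟩ := exists_finset_aeval_apply_mem hdense
    (hT.isCompact_closure_image_of_bounded isBounded_closedBall) hK0 isOpen_ball
    ⟨x₀, mem_ball_self one_pos⟩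
  set c := ∑ p ∈ s, ‖aeval T p‖
  have hS : ∀ A ∈ aeval T '' (s : Set ℂ[X]), Commute A T ∧ ‖A‖ ≤ c := by
    rintro _ ⟨p, hp, rfl⟩
    exact ⟨Polynomial.commute_aeval_self T p,
      Finset.single_le_sum (f := fun p => ‖aeval T p‖) (fun _ _ => norm_nonneg _) hp⟩
  have hstep :
      ∀ b ∈ closedBall x₀ 1, ∃ A ∈ aeval T '' (s : Set ℂ[X]), A (T b) ∈ closedBall x₀ 1 := by
    intro b hb
    obtain ⟨p, hp, hpB⟩ := hs (T b) (subset_closure ⟨b, hb, rfl⟩)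
    exact ⟨_, ⟨p, hp, rfl⟩, ball_subset_closedBall hpB⟩
  obtain ⟨m, hm⟩ := (((tendsto_pow_mul_norm_pow_of_spectralRadius_eq_zero hrad c).mul_const
    ‖x₀‖).eventually (gt_mem_nhds (by simp : (0 : ℝ) * ‖x₀‖ < 1))).exists
  obtain ⟨P, -, hP, hPB⟩ :=
    exists_commute_norm_le_pow_apply_mem hS hstep (mem_closedBall_self zero_le_one) m
  have : ‖P ((T ^ m) x₀)‖ ≤ c ^ m * ‖T ^ m‖ * ‖x₀‖ := by
    calc ‖P ((T ^ m) x₀)‖ ≤ ‖P‖ * ‖(T ^ m) x₀‖ := P.le_opNorm _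
      _ ≤ c ^ m * (‖T ^ m‖ * ‖x₀‖) :=
        mul_le_mul hP ((T ^ m).le_opNorm x₀) (norm_nonneg _) ((norm_nonneg _).trans hP)
      _ = c ^ m * ‖T ^ m‖ * ‖x₀‖ := (mul_assoc _ _ _).symm
  linarith [hB _ hPB]

theorem aronszajn_smith
    (H : Type*) [NormedAddCommGroup H] [InnerProductSpace ℂ H] [CompleteSpace H]
    (hH : ¬ FiniteDimensional ℂ H)
    (T : H →L[ℂ] H) (hT : IsCompactOperator T) :
    ∃ M : Submodule ℂ H, IsClosed (M : Set H) ∧ M ≠ ⊥ ∧ M ≠ ⊤ ∧ ∀ x ∈ M, T x ∈ M := by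
  by_cases hev : ∃ μ, HasEigenvalue (T : End ℂ H) μ
  · obtain ⟨μ, hμ⟩ := hev
    exact exists_closed_invariant_of_hasEigenvalue hH hμ
  push Not at hev
  have hT0 : T ≠ 0 := by
    rintro rfl
    have : Nontrivial H := not_subsingleton_iff_nontrivial.mp fun _ => hH inferInstance
    obtain ⟨v, hv⟩ := exists_ne (0 : H)
    exact hev 0 (hasEigenvalue_of_hasEigenvector ⟨by simp, hv⟩)
  obtain ⟨y, hy, hdense⟩ :=
    hT.exists_not_denseRange_aeval hT0 (hT.spectralRadius_eq_zero fun μ _ => hev μ)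
  exact exists_closed_invariant_of_not_denseRange_aeval hy hdense
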